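/- arXiv:2303.11105 — 6 statements merged into one kernel-verified Lean document; each statement's English description precedes it below -/
import Mathlib

section
/- The function f(x₁,x₂,x₃) = 1/√λ, with λ = x₁² + x₂² + x₃² − 2(x₁x₂ + x₁x₃ + x₂x₃), satisfies the three PDEs: x₁∂₁²f − x₃∂₃²f + ∂₁f − ∂₃f = 0, x₂∂₂²f − x₃∂₃²f + ∂₂f − ∂₃f = 0, and x₁∂₁f + x₂∂₂f + x₃∂₃f + f = 0, on any open set where λ > 0. -/
/-- The Källén polynomial `λ = x₁² + x₂² + x₃² − 2(x₁x₂ + x₁x₃ + x₂x₃)`. -/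
noncomputable def kallen (x1 x2 x3 : ℝ) : ℝ :=
  x1 ^ 2 + x2 ^ 2 + x3 ^ 2 - 2 * (x1 * x2 + x1 * x3 + x2 * x3)

/-- The function `1/√λ`. -/
noncomputable def triF (x1 x2 x3 : ℝ) : ℝ := (Real.sqrt (kallen x1 x2 x3))⁻¹

/-!
In each variable separately `λ` is a monic quadratic, e.g. `λ = (x₁ - x₂ - x₃)² - 4x₂x₃`, so along
each coordinate line `f = λ^{-1/2}` satisfies `∂f = -(x₁ - x₂ - x₃) f³` and
`∂²f = 3(x₁ - x₂ - x₃)² f⁵ - f³`. Since `xᵢ (∂ᵢλ / 2)² = xᵢ λ + 4x₁x₂x₃`, each equation becomes a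
multiple of `f² λ - 1 = 0`.
-/

open Filter Topology

theorem HasDerivAt.inv_sqrt {g : ℝ → ℝ} {g' v : ℝ} (hg : HasDerivAt g g' v) (hv : 0 < g v) :
    HasDerivAt (fun t => (√(g t))⁻¹) (-(g' / 2) * (√(g v))⁻¹ ^ 3) v := by
  have hs : √(g v) ≠ 0 := (Real.sqrt_pos.mpr hv).ne'
  refine ((hg.sqrt hv.ne').inv hs).congr_deriv ?_
  field_simp

noncomputable def invSqrtQuad (a c t : ℝ) : ℝ := (√((t - a) ^ 2 + c))⁻¹

section invSqrtQuad

variable {a c v : ℝ}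

theorem hasDerivAt_invSqrtQuad (hv : 0 < (v - a) ^ 2 + c) :
    HasDerivAt (invSqrtQuad a c) (-(v - a) * invSqrtQuad a c v ^ 3) v := by
  have hq : HasDerivAt (fun t => (t - a) ^ 2 + c) (2 * (v - a)) v := by
    refine ((((hasDerivAt_id v).sub_const a).pow 2).add_const c).congr_deriv ?_
    simp
  refine (hq.inv_sqrt hv).congr_deriv ?_
  unfold invSqrtQuad
  ring

theorem deriv_deriv_invSqrtQuad (hv : 0 < (v - a) ^ 2 + c) :
    deriv (deriv (invSqrtQuad a c)) v
      = 3 * (v - a) ^ 2 * invSqrtQuad a c v ^ 5 - invSqrtQuad a c v ^ 3 := by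
  have hev : deriv (invSqrtQuad a c) =ᶠ[𝓝 v] fun u => -(u - a) * invSqrtQuad a c u ^ 3 := by
    have hopen : IsOpen {u : ℝ | 0 < (u - a) ^ 2 + c} := isOpen_lt continuous_const (by fun_prop)
    filter_upwards [hopen.mem_nhds hv] with u hu
    exact (hasDerivAt_invSqrtQuad hu).deriv
  have hlin : HasDerivAt (fun u => -(u - a)) (-1) v :=
    ((hasDerivAt_id v).sub_const a).neg.congr_deriv (by simp)
  have hprod : HasDerivAt (fun u => -(u - a) * invSqrtQuad a c u ^ 3)
      (-1 * invSqrtQuad a c v ^ 3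
        + -(v - a) * (3 * invSqrtQuad a c v ^ 2 * (-(v - a) * invSqrtQuad a c v ^ 3))) v :=
    hlin.mul ((hasDerivAt_invSqrtQuad hv).fun_pow 3)
  rw [hev.deriv_eq, hprod.deriv]
  ring

end invSqrtQuad

theorem kallen_eq_sq_sub_left (x1 x2 x3 : ℝ) :
    kallen x1 x2 x3 = (x1 - (x2 + x3)) ^ 2 + -(4 * x2 * x3) := by
  unfold kallen; ring

theorem kallen_eq_sq_sub_middle (x1 x2 x3 : ℝ) :
    kallen x1 x2 x3 = (x2 - (x1 + x3)) ^ 2 + -(4 * x1 * x3) := by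
  unfold kallen; ring

theorem kallen_eq_sq_sub_right (x1 x2 x3 : ℝ) :
    kallen x1 x2 x3 = (x3 - (x1 + x2)) ^ 2 + -(4 * x1 * x2) := by
  unfold kallen; ring

theorem triF_eq_invSqrtQuad_left (x1 x2 x3 : ℝ) :
    triF x1 x2 x3 = invSqrtQuad (x2 + x3) (-(4 * x2 * x3)) x1 := by
  rw [triF, invSqrtQuad, kallen_eq_sq_sub_left]

theorem triF_eq_invSqrtQuad_middle (x1 x2 x3 : ℝ) :
    triF x1 x2 x3 = invSqrtQuad (x1 + x3) (-(4 * x1 * x3)) x2 := by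
  rw [triF, invSqrtQuad, kallen_eq_sq_sub_middle]

theorem triF_eq_invSqrtQuad_right (x1 x2 x3 : ℝ) :
    triF x1 x2 x3 = invSqrtQuad (x1 + x2) (-(4 * x1 * x2)) x3 := by
  rw [triF, invSqrtQuad, kallen_eq_sq_sub_right]

theorem triF_sq_mul_kallen {x1 x2 x3 : ℝ} (hl : 0 < kallen x1 x2 x3) :
    triF x1 x2 x3 ^ 2 * kallen x1 x2 x3 = 1 := by
  rw [triF, inv_pow, Real.sq_sqrt hl.le, inv_mul_cancel₀ hl.ne']

/-- `f = 1/√λ` satisfies the three conformal PDEs of the triangle integral wherever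
`λ > 0`. -/
theorem triF_solves_conformal_PDEs (x1 x2 x3 : ℝ) (hl : 0 < kallen x1 x2 x3) :
    x1 * deriv (fun u => deriv (fun v => triF v x2 x3) u) x1
      - x3 * deriv (fun u => deriv (fun v => triF x1 x2 v) u) x3
      + deriv (fun v => triF v x2 x3) x1 - deriv (fun v => triF x1 x2 v) x3 = 0 ∧
    x2 * deriv (fun u => deriv (fun v => triF x1 v x3) u) x2
      - x3 * deriv (fun u => deriv (fun v => triF x1 x2 v) u) x3
      + deriv (fun v => triF x1 v x3) x2 - deriv (fun v => triF x1 x2 v) x3 = 0 ∧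
    x1 * deriv (fun v => triF v x2 x3) x1 + x2 * deriv (fun v => triF x1 v x3) x2
      + x3 * deriv (fun v => triF x1 x2 v) x3 + triF x1 x2 x3 = 0 := by
  have h1 := kallen_eq_sq_sub_left x1 x2 x3 ▸ hl
  have h2 := kallen_eq_sq_sub_middle x1 x2 x3 ▸ hl
  have h3 := kallen_eq_sq_sub_right x1 x2 x3 ▸ hl
  rw [funext (triF_eq_invSqrtQuad_left · x2 x3), funext (triF_eq_invSqrtQuad_middle x1 · x3),
    funext (triF_eq_invSqrtQuad_right x1 x2)]
  rw [deriv_deriv_invSqrtQuad h1, deriv_deriv_invSqrtQuad h2, deriv_deriv_invSqrtQuad h3,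
    (hasDerivAt_invSqrtQuad h1).deriv, (hasDerivAt_invSqrtQuad h2).deriv,
    (hasDerivAt_invSqrtQuad h3).deriv, ← triF_eq_invSqrtQuad_left x1 x2 x3,
    ← triF_eq_invSqrtQuad_middle x1 x2 x3, ← triF_eq_invSqrtQuad_right x1 x2 x3]
  have hf := triF_sq_mul_kallen hl
  unfold kallen at hf
  refine ⟨?_, ?_, ?_⟩
  · linear_combination 3 * (x1 - x3) * triF x1 x2 x3 ^ 3 * hf
  · linear_combination 3 * (x2 - x3) * triF x1 x2 x3 ^ 3 * hf
  · linear_combination -triF x1 x2 x3 * hf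
end

section
/- The four polynomials 1, x₁ − x₂, x₁ − x₃, and (x₁ − x₂)(x₁ − x₃) form a basis of the vector space of polynomials p ∈ ℂ[x₁,x₂,x₃] satisfying ∂₂²p = 0, ∂₃²p = 0, and (∂₁ + ∂₂ + ∂₃)p = 0. In particular, this solution space has dimension 4. -/
/-!
The substitution `shear : x ↦ (x₁, x₁ - x₂, x₁ - x₃)` is an involutive algebra automorphism,
and by the chain rule it turns the system `∂₂² p = ∂₃² p = (∂₁ + ∂₂ + ∂₃) p = 0` into
`∂₂² q = ∂₃² q = ∂₁ q = 0`. Comparing coefficients, the solutions of the latter system are the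
polynomials in `x₂, x₃` of degree at most one in each variable, i.e. the span of the monomials
`1, x₂, x₃, x₂ x₃`; `shear` maps these to the four claimed polynomials.
-/

open MvPolynomial

namespace MvPolynomial

section ChainRule

variable {R σ τ : Type*} [CommSemiring R] [Fintype σ]

theorem pderiv_aeval (g : σ → MvPolynomial τ R) (i : τ) (p : MvPolynomial σ R) :
    pderiv i (aeval g p) = ∑ j, pderiv i (g j) * aeval g (pderiv j p) := by
  classical
  induction p using MvPolynomial.induction_on with
  | C a => simp
  | add p q hp hq => simp only [map_add, hp, hq, mul_add, Finset.sum_add_distrib]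
  | mul_X p n ih =>
    simp only [map_mul, aeval_X, pderiv_mul, ih, pderiv_X, Pi.single_apply, mul_ite, mul_one,
      mul_zero, map_add, apply_ite (aeval g), map_zero, mul_add, Finset.sum_add_distrib,
      Finset.sum_mul, Finset.sum_ite_eq, Finset.mem_univ, if_true, mul_assoc]
    ring

end ChainRule

variable {R σ : Type*}

theorem coeff_eq_zero_of_iterate_pderiv_eq_zero [CommSemiring R] [CharZero R]
    [NoZeroDivisors R] {i : σ} {k : ℕ} {p : MvPolynomial σ R} (h : (pderiv i)^[k] p = 0)
    {m : σ →₀ ℕ} (hm : k ≤ m i) : coeff m p = 0 := by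
  induction k generalizing p m with
  | zero => simp [show p = 0 from h]
  | succ k ih =>
    set n := m - Finsupp.single i 1
    have hnm : n + Finsupp.single i 1 = m :=
      tsub_add_cancel_of_le (Finsupp.single_le_iff.mpr (by omega))
    have hn : k ≤ n i := by simp [n]; omega
    have hcoeff := ih (Function.iterate_succ_apply _ _ _ ▸ h) hn
    rw [coeff_pderiv, hnm] at hcoeff
    exact (mul_eq_zero.mp hcoeff).resolve_right (Nat.cast_add_one_ne_zero _)

theorem mem_span_one_X_X_mul_X [CommSemiring R] [CharZero R] [NoZeroDivisors R]
    {q : MvPolynomial (Fin 3) R} (h₀ : pderiv 0 q = 0) (h₁ : pderiv 1 (pderiv 1 q) = 0)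
    (h₂ : pderiv 2 (pderiv 2 q) = 0) :
    q ∈ Submodule.span R (Set.range ![1, X 1, X 2, X 1 * X 2]) := by
  rw [← support_sum_monomial_coeff q]
  refine Submodule.sum_mem _ fun m hm ↦ ?_
  have bound {i : Fin 3} {k : ℕ} (h : (pderiv i)^[k] q = 0) : m i < k := by
    by_contra! hk
    exact mem_support_iff.mp hm (coeff_eq_zero_of_iterate_pderiv_eq_zero h hk)
  have hm₀ : m 0 = 0 := Nat.lt_one_iff.mp (bound (k := 1) h₀)
  have hm₁ : m 1 < 2 := bound h₁
  have hm₂ : m 2 < 2 := bound h₂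
  have hmonomial : monomial m (1 : R) = X 1 ^ m 1 * X 2 ^ m 2 := by
    rw [monomial_eq, Finsupp.prod_fintype _ _ fun i ↦ pow_zero (X i), Fin.prod_univ_three, hm₀]
    simp
  rw [show monomial m (coeff m q) = coeff m q • monomial m 1 by simp [smul_monomial],
    hmonomial]
  refine Submodule.smul_mem _ _ (Submodule.subset_span ?_)
  interval_cases m 1 <;> interval_cases m 2
  exacts [⟨0, by simp⟩, ⟨2, by simp⟩, ⟨1, by simp⟩, ⟨3, by simp⟩]

theorem linearIndependent_one_X_X_mul_X [CommSemiring R] [Nontrivial R] :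
    LinearIndependent R ![(1 : MvPolynomial (Fin 3) R), X 1, X 2, X 1 * X 2] := by
  let exponents : Fin 4 → Fin 3 →₀ ℕ :=
    ![0, Finsupp.single 1 1, Finsupp.single 2 1, Finsupp.single 1 1 + Finsupp.single 2 1]
  have hexponents : Function.Injective exponents := by
    intro a b h
    have h₁ := DFunLike.congr_fun h 1
    have h₂ := DFunLike.congr_fun h 2
    fin_cases a <;> fin_cases b <;> simp [exponents] at h₁ h₂ ⊢
  convert (basisMonomials (Fin 3) R).linearIndependent.comp _ hexponents
  ext i : 1
  fin_cases i <;> simp [exponents, X, monomial_mul]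

section Shear

variable [CommRing R]

noncomputable def shear : MvPolynomial (Fin 3) R →ₐ[R] MvPolynomial (Fin 3) R :=
  aeval ![X 0, X 0 - X 1, X 0 - X 2]

@[simp] theorem shear_X_zero : shear (X 0 : MvPolynomial (Fin 3) R) = X 0 := by simp [shear]
@[simp] theorem shear_X_one : shear (X 1 : MvPolynomial (Fin 3) R) = X 0 - X 1 := by simp [shear]
@[simp] theorem shear_X_two : shear (X 2 : MvPolynomial (Fin 3) R) = X 0 - X 2 := by simp [shear]

theorem shear_shear (p : MvPolynomial (Fin 3) R) : shear (shear p) = p := by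
  suffices (shear.comp shear : MvPolynomial (Fin 3) R →ₐ[R] _) = AlgHom.id R _ from
    DFunLike.congr_fun this p
  refine algHom_ext fun i ↦ ?_
  fin_cases i <;> simp

theorem shear_injective : Function.Injective (shear : MvPolynomial (Fin 3) R → _) :=
  Function.LeftInverse.injective shear_shear

theorem pderiv_zero_shear (p : MvPolynomial (Fin 3) R) :
    pderiv 0 (shear p) = shear (pderiv 0 p + pderiv 1 p + pderiv 2 p) := by
  rw [shear, pderiv_aeval]
  simp [Fin.sum_univ_three, pderiv_X]

theorem pderiv_shear_of_ne_zero {i : Fin 3} (hi : i ≠ 0) (p : MvPolynomial (Fin 3) R) :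
    pderiv i (shear p) = -shear (pderiv i p) := by
  fin_cases i
  · exact absurd rfl hi
  all_goals rw [shear, pderiv_aeval]; simp [Fin.sum_univ_three, pderiv_X]

theorem pderiv_pderiv_shear_of_ne_zero {i : Fin 3} (hi : i ≠ 0) (p : MvPolynomial (Fin 3) R) :
    pderiv i (pderiv i (shear p)) = shear (pderiv i (pderiv i p)) := by
  rw [pderiv_shear_of_ne_zero hi, map_neg, pderiv_shear_of_ne_zero hi, neg_neg]

theorem sum_pderiv_shear (p : MvPolynomial (Fin 3) R) :
    pderiv 0 (shear p) + pderiv 1 (shear p) + pderiv 2 (shear p) = shear (pderiv 0 p) := by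
  rw [pderiv_zero_shear, pderiv_shear_of_ne_zero (by decide),
    pderiv_shear_of_ne_zero (by decide), map_add, map_add]
  abel

theorem shear_comp_one_X_X_mul_X :
    shear ∘ ![(1 : MvPolynomial (Fin 3) R), X 1, X 2, X 1 * X 2] =
      ![1, X 0 - X 1, X 0 - X 2, (X 0 - X 1) * (X 0 - X 2)] := by
  ext i : 1
  fin_cases i <;> simp

end Shear

end MvPolynomial

/-- The four polynomials `1, x₁−x₂, x₁−x₃, (x₁−x₂)(x₁−x₃)` are a basis of the space of
solutions `p ∈ ℂ[x₁,x₂,x₃]` of `∂₂²p = 0`, `∂₃²p = 0`, `(∂₁+∂₂+∂₃)p = 0`: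
they are linearly independent, each satisfies the equations, and every solution lies in
their span. In particular the solution space has dimension 4. -/
theorem orthogonal_complement_basis :
    LinearIndependent ℂ
      ![(1 : MvPolynomial (Fin 3) ℂ), X 0 - X 1, X 0 - X 2, (X 0 - X 1) * (X 0 - X 2)] ∧
    (∀ i : Fin 4,
      pderiv 1 (pderiv 1
        (![(1 : MvPolynomial (Fin 3) ℂ), X 0 - X 1, X 0 - X 2,
            (X 0 - X 1) * (X 0 - X 2)] i)) = 0 ∧
      pderiv 2 (pderiv 2
        (![(1 : MvPolynomial (Fin 3) ℂ), X 0 - X 1, X 0 - X 2,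
            (X 0 - X 1) * (X 0 - X 2)] i)) = 0 ∧
      pderiv 0 (![(1 : MvPolynomial (Fin 3) ℂ), X 0 - X 1, X 0 - X 2,
            (X 0 - X 1) * (X 0 - X 2)] i)
        + pderiv 1 (![(1 : MvPolynomial (Fin 3) ℂ), X 0 - X 1, X 0 - X 2,
            (X 0 - X 1) * (X 0 - X 2)] i)
        + pderiv 2 (![(1 : MvPolynomial (Fin 3) ℂ), X 0 - X 1, X 0 - X 2,
            (X 0 - X 1) * (X 0 - X 2)] i) = 0) ∧
    (∀ p : MvPolynomial (Fin 3) ℂ,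
      pderiv 1 (pderiv 1 p) = 0 → pderiv 2 (pderiv 2 p) = 0 →
      pderiv 0 p + pderiv 1 p + pderiv 2 p = 0 →
      p ∈ Submodule.span ℂ
        (Set.range ![(1 : MvPolynomial (Fin 3) ℂ), X 0 - X 1, X 0 - X 2,
          (X 0 - X 1) * (X 0 - X 2)])) := by
  rw [← shear_comp_one_X_X_mul_X]
  refine ⟨linearIndependent_one_X_X_mul_X.map' shear.toLinearMap
    (LinearMap.ker_eq_bot.mpr shear_injective), fun i ↦ ?_, fun p h₁ h₂ h₀ ↦ ?_⟩
  · simp only [Function.comp_apply, sum_pderiv_shear,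
      pderiv_pderiv_shear_of_ne_zero (show (1 : Fin 3) ≠ 0 by decide),
      pderiv_pderiv_shear_of_ne_zero (show (2 : Fin 3) ≠ 0 by decide)]
    fin_cases i <;> simp [pderiv_X]
  · have hq : shear p ∈ Submodule.span ℂ (Set.range ![1, X 1, X 2, X 1 * X 2]) :=
      mem_span_one_X_X_mul_X (by rw [pderiv_zero_shear, h₀, map_zero])
        (by rw [pderiv_pderiv_shear_of_ne_zero (by decide), h₁, map_zero])
        (by rw [pderiv_pderiv_shear_of_ne_zero (by decide), h₂, map_zero])
    rw [← shear_shear p, Set.range_comp]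
    exact Submodule.apply_mem_span_image_of_mem_span shear.toLinearMap hq
end

section
/- The four functions m₁ = x₁⁻¹, m₂ = x₁⁻¹·log(x₁/x₂), m₃ = x₁⁻¹·log(x₁/x₃), m₄ = x₁⁻¹·log(x₁/x₂)·log(x₁/x₃), defined on (0,∞)³, are linearly independent over ℝ and each satisfies the three PDEs: (x₁∂₁ + x₂∂₂ + x₃∂₃ + 1)f = 0, (x₂∂₂² + ∂₂)f = 0, (x₃∂₃² + ∂₃)f = 0. -/
/-! Every function in the span of `m₁, …, m₄` has the form `x₁⁻¹ P(log(x₁/x₂), log(x₁/x₃))` with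
`P` of degree at most one in each variable. Such a function is homogeneous of degree `-1`, which
gives the Euler equation, and for fixed `x₁` it is affine in `log x₂` and in `log x₃`; since
`x ∂² + ∂ = ∂ ∘ x ∂` and `x ∂` maps `A + B log x` to a constant, the other two operators kill it.
Linear independence follows by evaluating at `(1,1,1)`, `(1,e,1)`, `(1,1,e)`, `(1,e,e)`. -/

/-- The four starting-monomial functions `m₁ = x₁⁻¹`, `m₂ = x₁⁻¹ log(x₁/x₂)`,
`m₃ = x₁⁻¹ log(x₁/x₃)`, `m₄ = x₁⁻¹ log(x₁/x₂) log(x₁/x₃)`. -/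
noncomputable def startMon : Fin 4 → ℝ → ℝ → ℝ → ℝ
  | 0 => fun x1 _ _ => x1⁻¹
  | 1 => fun x1 x2 _ => x1⁻¹ * Real.log (x1 / x2)
  | 2 => fun x1 _ x3 => x1⁻¹ * Real.log (x1 / x3)
  | 3 => fun x1 x2 x3 => x1⁻¹ * Real.log (x1 / x2) * Real.log (x1 / x3)

open Real Filter Topology

lemma hasDerivAt_log_div_const {c x : ℝ} (hc : c ≠ 0) (hx : x ≠ 0) :
    HasDerivAt (fun v => log (v / c)) x⁻¹ x := by
  convert ((hasDerivAt_id' x).div_const c).log (div_ne_zero hx hc) using 1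
  field_simp

lemma hasDerivAt_log_const_div {c x : ℝ} (hc : c ≠ 0) (hx : x ≠ 0) :
    HasDerivAt (fun v => log (c / v)) (-x⁻¹) x := by
  convert ((hasDerivAt_const x c).fun_div (hasDerivAt_id' x) hx).log (div_ne_zero hc hx) using 1
  field_simp
  ring

lemma hasDerivAt_add_mul_log_const_div (A B : ℝ) {c x : ℝ} (hc : c ≠ 0) (hx : x ≠ 0) :
    HasDerivAt (fun v => A + B * log (c / v)) (-B * x⁻¹) x := by
  simpa using ((hasDerivAt_log_const_div hc hx).const_mul B).const_add A

lemma mul_deriv_deriv_add_deriv_add_mul_log_const_div (A B : ℝ) {c x : ℝ} (hc : c ≠ 0)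
    (hx : x ≠ 0) :
    x * deriv (fun u => deriv (fun v => A + B * log (c / v)) u) x
      + deriv (fun v => A + B * log (c / v)) x = 0 := by
  have hderiv : deriv (fun v => A + B * log (c / v)) =ᶠ[𝓝 x] fun u => -B * u⁻¹ := by
    filter_upwards [eventually_ne_nhds hx] with u hu
    exact (hasDerivAt_add_mul_log_const_div A B hc hu).deriv
  rw [hderiv.deriv_eq, ((hasDerivAt_inv hx).const_mul (-B)).deriv,
    (hasDerivAt_add_mul_log_const_div A B hc hx).deriv]
  field_simp
  ring

/-- `a m₁ + b m₂ + c m₃ + d m₄`. -/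
noncomputable def startMonComb (a b c d x1 x2 x3 : ℝ) : ℝ :=
  x1⁻¹ * (a + b * log (x1 / x2) + c * log (x1 / x3) + d * log (x1 / x2) * log (x1 / x3))

lemma eq_zero_of_startMonComb_eq_zero {a b c d : ℝ}
    (h : ∀ x1 x2 x3 : ℝ, 0 < x1 → 0 < x2 → 0 < x3 → startMonComb a b c d x1 x2 x3 = 0) :
    a = 0 ∧ b = 0 ∧ c = 0 ∧ d = 0 := by
  have he := exp_pos 1
  have h₀ := h 1 1 1 one_pos one_pos one_pos
  have h₂ := h 1 (exp 1) 1 one_pos he one_pos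
  have h₃ := h 1 1 (exp 1) one_pos one_pos he
  have h₂₃ := h 1 (exp 1) (exp 1) one_pos he he
  -- `log (1 / e) = -1`, so the four values are `a`, `a - b`, `a - c`, `a - b - c + d`.
  simp only [startMonComb, one_div, log_inv, log_exp, log_one, inv_one, div_one] at h₀ h₂ h₃ h₂₃
  refine ⟨?_, ?_, ?_, ?_⟩ <;> linarith

lemma startMonComb_slice_snd (a b c d x1 x3 : ℝ) :
    (fun v => startMonComb a b c d x1 v x3) = fun v =>
      x1⁻¹ * (a + c * log (x1 / x3)) + x1⁻¹ * (b + d * log (x1 / x3)) * log (x1 / v) := by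
  funext v
  simp only [startMonComb]
  ring

lemma startMonComb_slice_thd (a b c d x1 x2 : ℝ) :
    (fun v => startMonComb a b c d x1 x2 v) = fun v =>
      x1⁻¹ * (a + b * log (x1 / x2)) + x1⁻¹ * (c + d * log (x1 / x2)) * log (x1 / v) := by
  funext v
  simp only [startMonComb]
  ring

lemma hasDerivAt_startMonComb_fst (a b c d : ℝ) {x1 x2 x3 : ℝ} (h1 : x1 ≠ 0) (h2 : x2 ≠ 0)
    (h3 : x3 ≠ 0) :
    HasDerivAt (fun v => startMonComb a b c d v x2 x3)
      (-(x1 ^ 2)⁻¹ * (a + b * log (x1 / x2) + c * log (x1 / x3)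
          + d * log (x1 / x2) * log (x1 / x3))
        + x1⁻¹ * (b * x1⁻¹ + c * x1⁻¹
          + (d * x1⁻¹ * log (x1 / x3) + d * log (x1 / x2) * x1⁻¹))) x1 := by
  have L2 := hasDerivAt_log_div_const h2 h1
  have L3 := hasDerivAt_log_div_const h3 h1
  exact (hasDerivAt_inv h1).mul ((((L2.const_mul b).const_add a).add (L3.const_mul c)).add
    ((L2.const_mul d).mul L3))

lemma startMonComb_euler (a b c d : ℝ) {x1 x2 x3 : ℝ} (h1 : x1 ≠ 0) (h2 : x2 ≠ 0)
    (h3 : x3 ≠ 0) :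
    x1 * deriv (fun v => startMonComb a b c d v x2 x3) x1
      + x2 * deriv (fun v => startMonComb a b c d x1 v x3) x2
      + x3 * deriv (fun v => startMonComb a b c d x1 x2 v) x3
      + startMonComb a b c d x1 x2 x3 = 0 := by
  rw [(hasDerivAt_startMonComb_fst a b c d h1 h2 h3).deriv, startMonComb_slice_snd,
    startMonComb_slice_thd,
    (hasDerivAt_add_mul_log_const_div _ _ h1 h2).deriv,
    (hasDerivAt_add_mul_log_const_div _ _ h1 h3).deriv]
  simp only [startMonComb]
  field_simp
  ring

lemma startMonComb_ode_snd (a b c d : ℝ) {x1 x2 : ℝ} (x3 : ℝ) (h1 : x1 ≠ 0) (h2 : x2 ≠ 0) :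
    x2 * deriv (fun u => deriv (fun v => startMonComb a b c d x1 v x3) u) x2
      + deriv (fun v => startMonComb a b c d x1 v x3) x2 = 0 := by
  rw [startMonComb_slice_snd]
  exact mul_deriv_deriv_add_deriv_add_mul_log_const_div _ _ h1 h2

lemma startMonComb_ode_thd (a b c d : ℝ) {x1 x3 : ℝ} (x2 : ℝ) (h1 : x1 ≠ 0) (h3 : x3 ≠ 0) :
    x3 * deriv (fun u => deriv (fun v => startMonComb a b c d x1 x2 v) u) x3
      + deriv (fun v => startMonComb a b c d x1 x2 v) x3 = 0 := by
  rw [startMonComb_slice_thd]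
  exact mul_deriv_deriv_add_deriv_add_mul_log_const_div _ _ h1 h3

lemma startMon_eq_startMonComb (i : Fin 4) :
    ∃ a b c d : ℝ, startMon i = startMonComb a b c d := by
  fin_cases i
  exacts [⟨1, 0, 0, 0, by funext x1 x2 x3; simp only [startMon, startMonComb]; ring⟩,
    ⟨0, 1, 0, 0, by funext x1 x2 x3; simp only [startMon, startMonComb]; ring⟩,
    ⟨0, 0, 1, 0, by funext x1 x2 x3; simp only [startMon, startMonComb]; ring⟩,
    ⟨0, 0, 0, 1, by funext x1 x2 x3; simp only [startMon, startMonComb]; ring⟩]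

lemma sum_startMon_eq_startMonComb (a b c d x1 x2 x3 : ℝ) :
    a * startMon 0 x1 x2 x3 + b * startMon 1 x1 x2 x3 + c * startMon 2 x1 x2 x3
      + d * startMon 3 x1 x2 x3 = startMonComb a b c d x1 x2 x3 := by
  simp only [startMon, startMonComb]
  ring

/-- The functions `m₁,…,m₄` are linearly independent on `(0,∞)³` and each solves the
PDEs `(x₁∂₁+x₂∂₂+x₃∂₃+1)f = 0`, `(x₂∂₂²+∂₂)f = 0`, `(x₃∂₃²+∂₃)f = 0` generated by the
initial ideal of `I₃` with respect to `w = (−1,0,1)`. -/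
theorem startMon_independent_and_solve :
    (∀ a b c d : ℝ,
      (∀ x1 x2 x3 : ℝ, 0 < x1 → 0 < x2 → 0 < x3 →
        a * startMon 0 x1 x2 x3 + b * startMon 1 x1 x2 x3
          + c * startMon 2 x1 x2 x3 + d * startMon 3 x1 x2 x3 = 0) →
      a = 0 ∧ b = 0 ∧ c = 0 ∧ d = 0) ∧
    (∀ i : Fin 4, ∀ x1 x2 x3 : ℝ, 0 < x1 → 0 < x2 → 0 < x3 →
      (x1 * deriv (fun v => startMon i v x2 x3) x1
        + x2 * deriv (fun v => startMon i x1 v x3) x2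
        + x3 * deriv (fun v => startMon i x1 x2 v) x3 + startMon i x1 x2 x3 = 0) ∧
      (x2 * deriv (fun u => deriv (fun v => startMon i x1 v x3) u) x2
        + deriv (fun v => startMon i x1 v x3) x2 = 0) ∧
      (x3 * deriv (fun u => deriv (fun v => startMon i x1 x2 v) u) x3
        + deriv (fun v => startMon i x1 x2 v) x3 = 0)) := by
  refine ⟨fun a b c d h => eq_zero_of_startMonComb_eq_zero fun x1 x2 x3 h1 h2 h3 => ?_,
    fun i x1 x2 x3 h1 h2 h3 => ?_⟩
  · rw [← sum_startMon_eq_startMonComb]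
    exact h x1 x2 x3 h1 h2 h3
  · obtain ⟨a, b, c, d, hi⟩ := startMon_eq_startMonComb i
    rw [hi]
    exact ⟨startMonComb_euler a b c d h1.ne' h2.ne' h3.ne',
      startMonComb_ode_snd a b c d x3 h1.ne' h2.ne',
      startMonComb_ode_thd a b c d x2 h1.ne' h3.ne'⟩
end

section
/- The indicial ideal J = ⟨θ₁ + θ₂ + θ₃ + 1, θ₂², θ₃²⟩ in ℂ[θ₁,θ₂,θ₃] has the unique common zero (−1, 0, 0), and ℂ[θ₁,θ₂,θ₃]/J is a 4-dimensional ℂ-vector space. -/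
/-!
Modulo `J` one has `θ₁ = -1 - θ₂ - θ₃`, so `ℂ[θ]/J ≅ ℂ[θ₂, θ₃]/(θ₂², θ₃²) ≅ ℂ[ε] ⊗ ℂ[ε]`, a free
module of rank `2 · 2 = 4`. The isomorphism is built from both universal properties: `θ ↦
(-1 - ε ⊗ 1 - 1 ⊗ ε, ε ⊗ 1, 1 ⊗ ε)` kills the generators of `J`, and `ε ⊗ 1, 1 ⊗ ε` go back to
the classes of `θ₂, θ₃`, which square to zero. The common zeros are read off the generators, since
a reduced ring has no nonzero square-zero elements.
-/

open MvPolynomial TensorProduct DualNumber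

noncomputable section

variable (R : Type*) [CommRing R]

def indicialIdeal : Ideal (MvPolynomial (Fin 3) R) :=
  Ideal.span {X 0 + X 1 + X 2 + 1, X 1 ^ 2, X 2 ^ 2}

variable {R}

theorem indicialIdeal_le_ker_iff {A F : Type*} [Semiring A] [FunLike F (MvPolynomial (Fin 3) R) A]
    [RingHomClass F (MvPolynomial (Fin 3) R) A] (f : F) :
    indicialIdeal R ≤ RingHom.ker f ↔
      f (X 0) + f (X 1) + f (X 2) + 1 = 0 ∧ f (X 1) ^ 2 = 0 ∧ f (X 2) ^ 2 = 0 := by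
  simp [indicialIdeal, Ideal.span_le, Set.insert_subset_iff]

theorem mem_zeroLocus_indicialIdeal_iff [IsReduced R] (x : Fin 3 → R) :
    (∀ p ∈ indicialIdeal R, eval x p = 0) ↔ x = ![-1, 0, 0] := by
  change indicialIdeal R ≤ RingHom.ker (eval x) ↔ _
  simp only [indicialIdeal_le_ker_iff, eval_X]
  constructor
  · rintro ⟨hsum, hsq1, hsq2⟩
    have h1 : x 1 = 0 := IsReduced.eq_zero _ ⟨2, hsq1⟩
    have h2 : x 2 = 0 := IsReduced.eq_zero _ ⟨2, hsq2⟩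
    have h0 : x 0 = -1 := by linear_combination hsum - h1 - h2
    ext i; fin_cases i <;> simp [h0, h1, h2]
  · rintro rfl
    simp

theorem zeroLocus_indicialIdeal [IsReduced R] :
    {x : Fin 3 → R | ∀ p ∈ indicialIdeal R, eval x p = 0} = {![-1, 0, 0]} :=
  Set.ext mem_zeroLocus_indicialIdeal_iff

variable (R) in
theorem mk_indicialIdeal_relations :
    let x i := Ideal.Quotient.mk (indicialIdeal R) (X i)
    x 0 + x 1 + x 2 + 1 = 0 ∧ x 1 ^ 2 = 0 ∧ x 2 ^ 2 = 0 := by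
  simpa using (indicialIdeal_le_ker_iff (Ideal.Quotient.mk (indicialIdeal R))).1 Ideal.mk_ker.ge

def DualNumber.liftOfSqEqZero {A : Type*} [CommRing A] [Algebra R A] (e : A) (he : e ^ 2 = 0) :
    R[ε] →ₐ[R] A :=
  DualNumber.lift ⟨(Algebra.ofId R A, e), by rwa [← sq], fun _ => Commute.all _ _⟩

@[simp]
theorem DualNumber.liftOfSqEqZero_eps {A : Type*} [CommRing A] [Algebra R A] (e : A)
    (he : e ^ 2 = 0) :
    DualNumber.liftOfSqEqZero e he (ε : R[ε]) = e :=
  DualNumber.lift_apply_eps _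

theorem finrank_dualNumber_tensor [Nontrivial R] : Module.finrank R (R[ε] ⊗[R] R[ε]) = 4 := by
  let e : R[ε] ≃ₗ[R] R × R := LinearEquiv.refl R (R × R)
  have : Module.Free R R[ε] := .of_equiv e.symm
  have : Module.Finite R R[ε] := .equiv e.symm
  rw [Module.finrank_tensorProduct, e.finrank_eq]
  simp

variable (R) in
def indicialPoint : Fin 3 → R[ε] ⊗[R] R[ε] :=
  ![-1 - ε ⊗ₜ[R] (1 : R[ε]) - (1 : R[ε]) ⊗ₜ[R] ε, ε ⊗ₜ[R] (1 : R[ε]), (1 : R[ε]) ⊗ₜ[R] ε]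

theorem indicialIdeal_le_ker_aeval_indicialPoint :
    indicialIdeal R ≤ RingHom.ker (aeval (indicialPoint R)) := by
  rw [indicialIdeal_le_ker_iff]
  simp only [aeval_X, indicialPoint, Matrix.cons_val]
  refine ⟨by ring, ?_, ?_⟩ <;> simp [sq, eps_mul_eps]

variable (R) in
def quotientIndicialIdealToTensor :
    MvPolynomial (Fin 3) R ⧸ indicialIdeal R →ₐ[R] R[ε] ⊗[R] R[ε] :=
  Ideal.Quotient.liftₐ _ (aeval (indicialPoint R)) fun _ ha =>
    indicialIdeal_le_ker_aeval_indicialPoint ha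

variable (R) in
def tensorToQuotientIndicialIdeal :
    R[ε] ⊗[R] R[ε] →ₐ[R] MvPolynomial (Fin 3) R ⧸ indicialIdeal R :=
  Algebra.TensorProduct.productMap
    (DualNumber.liftOfSqEqZero _ (mk_indicialIdeal_relations R).2.1)
    (DualNumber.liftOfSqEqZero _ (mk_indicialIdeal_relations R).2.2)

@[simp]
theorem quotientIndicialIdealToTensor_mk (p : MvPolynomial (Fin 3) R) :
    quotientIndicialIdealToTensor R (Ideal.Quotient.mk _ p) = aeval (indicialPoint R) p :=
  Ideal.Quotient.lift_mk _ _ _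

@[simp]
theorem tensorToQuotientIndicialIdeal_eps_tmul_one :
    tensorToQuotientIndicialIdeal R ((ε : R[ε]) ⊗ₜ[R] (1 : R[ε])) =
      Ideal.Quotient.mk (indicialIdeal R) (X 1) := by
  simp [tensorToQuotientIndicialIdeal]

@[simp]
theorem tensorToQuotientIndicialIdeal_one_tmul_eps :
    tensorToQuotientIndicialIdeal R ((1 : R[ε]) ⊗ₜ[R] (ε : R[ε])) =
      Ideal.Quotient.mk (indicialIdeal R) (X 2) := by
  simp [tensorToQuotientIndicialIdeal]

variable (R) in
def quotientIndicialIdealEquiv :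
    (MvPolynomial (Fin 3) R ⧸ indicialIdeal R) ≃ₐ[R] R[ε] ⊗[R] R[ε] :=
  AlgEquiv.ofAlgHom (quotientIndicialIdealToTensor R) (tensorToQuotientIndicialIdeal R)
    (by ext <;> simp [indicialPoint])
    (Ideal.Quotient.algHom_ext _ <| MvPolynomial.algHom_ext fun i => by
      fin_cases i
      -- `map_one` does not fire on the `1` of `R[ε] ⊗[R] R[ε]`; unfold it to `1 ⊗ₜ 1`.
      · simp [indicialPoint, Algebra.TensorProduct.one_def, tensorToQuotientIndicialIdeal]
        linear_combination -(mk_indicialIdeal_relations R).1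
      all_goals simp [indicialPoint])

theorem finrank_quotient_indicialIdeal [Nontrivial R] :
    Module.finrank R (MvPolynomial (Fin 3) R ⧸ indicialIdeal R) = 4 := by
  rw [(quotientIndicialIdealEquiv R).toLinearEquiv.finrank_eq, finrank_dualNumber_tensor]

/-- The indicial ideal `J = ⟨θ₁+θ₂+θ₃+1, θ₂², θ₃²⟩` has unique common zero `(−1,0,0)`,
and `ℂ[θ]/J` is a 4-dimensional `ℂ`-vector space. -/
theorem indicial_ideal_zero_and_rank :
    {x : Fin 3 → ℂ | ∀ p ∈ Ideal.span
        ({X 0 + X 1 + X 2 + 1, (X 1) ^ 2, (X 2) ^ 2} : Set (MvPolynomial (Fin 3) ℂ)),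
      eval x p = 0} = {![-1, 0, 0]} ∧
    Module.finrank ℂ
      (MvPolynomial (Fin 3) ℂ ⧸ Ideal.span
        ({X 0 + X 1 + X 2 + 1, (X 1) ^ 2, (X 2) ^ 2} : Set (MvPolynomial (Fin 3) ℂ)))
      = 4 :=
  ⟨zeroLocus_indicialIdeal, finrank_quotient_indicialIdeal⟩

end
end

section
/- The function f₃(y) = log(y)² + 2·Li₂(−y), where Li₂(z) = Σ_{p≥1} z^p/p², satisfies the fourth-order ODE y³(y+1)f⁗ + y²(6+8y)f‴ + y(7+14y)f″ + (1+4y)f′ = 0 for 0 < y < 1. -/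
/-!
The operator of the ODE factors as `∂ ∘ y ∘ ∂ ∘ y(y+1) ∘ ∂ ∘ y ∘ ∂`. Termwise differentiation gives
`(Li₂(-y))' = -log(1+y)/y`, so `y f₃' = 2 (log y - log (1+y))`, whose derivative is
`2/(y(y+1))`. Hence `y(y+1) ∂(y f₃') = 2` is constant and the two outer derivatives kill it.
-/

/-- The dilogarithm `Li₂(z) = Σ_{p≥1} z^p/p²`. -/
noncomputable def dilog (z : ℝ) : ℝ := ∑' p : ℕ, z ^ (p + 1) / ((p : ℝ) + 1) ^ 2

open Real Set Filter Topology

theorem hasDerivAt_dilog_tsum {z : ℝ} (hz : |z| < 1) :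
    HasDerivAt dilog (∑' p : ℕ, z ^ p / ((p : ℝ) + 1)) z := by
  set r : ℝ := (1 + |z|) / 2 with hr
  have hr0 : 0 < r := by positivity
  have hr1 : r < 1 := by linarith
  have hzr : z ∈ Ioo (-r) r := ⟨by linarith [neg_abs_le z], by linarith [le_abs_self z]⟩
  refine hasDerivAt_tsum_of_isPreconnected
    (g := fun (p : ℕ) (t : ℝ) => t ^ (p + 1) / ((p : ℝ) + 1) ^ 2)
    (g' := fun (p : ℕ) (t : ℝ) => t ^ p / ((p : ℝ) + 1))
    (summable_geometric_of_lt_one hr0.le hr1) isOpen_Ioo isPreconnected_Ioo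
    (fun p t _ => ?_) (fun p t ht => ?_) (y₀ := 0) ⟨by linarith, hr0⟩ (by simp) hzr
  · refine ((hasDerivAt_pow (p + 1) t).div_const (((p : ℝ) + 1) ^ 2)).congr_deriv ?_
    rw [Nat.add_sub_cancel]
    push_cast
    field_simp
  · have ht' : |t| ≤ r := abs_le.2 ⟨ht.1.le, ht.2.le⟩
    rw [norm_div, norm_pow, Real.norm_eq_abs, Real.norm_of_nonneg (by positivity)]
    calc |t| ^ p / ((p : ℝ) + 1) ≤ |t| ^ p := div_le_self (by positivity) (by simp)
      _ ≤ r ^ p := pow_le_pow_left₀ (abs_nonneg t) ht' p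

theorem tsum_pow_div_succ {z : ℝ} (hz : |z| < 1) (hz0 : z ≠ 0) :
    ∑' p : ℕ, z ^ p / ((p : ℝ) + 1) = -log (1 - z) / z := by
  refine (((hasSum_pow_div_log_of_abs_lt_one hz).div_const z).congr_fun fun p => ?_).tsum_eq
  field_simp
  ring

theorem hasDerivAt_dilog {z : ℝ} (hz : |z| < 1) (hz0 : z ≠ 0) :
    HasDerivAt dilog (-log (1 - z) / z) z :=
  tsum_pow_div_succ hz hz0 ▸ hasDerivAt_dilog_tsum hz

theorem ContDiffOn.hasDerivAt_iteratedDeriv {𝕜 F : Type*} [NontriviallyNormedField 𝕜]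
    [NormedAddCommGroup F] [NormedSpace 𝕜 F] {n : WithTop ℕ∞} {f : 𝕜 → F} {s : Set 𝕜}
    (hf : ContDiffOn 𝕜 n f s) (hs : IsOpen s) {m : ℕ} (hmn : m < n) {x : 𝕜} (hx : x ∈ s) :
    HasDerivAt (iteratedDeriv m f) (iteratedDeriv (m + 1) f x) x := by
  have hd := (hf.differentiableOn_iteratedDerivWithin hmn hs.uniqueDiffOn).congr
    (iteratedDerivWithin_of_isOpen hs).symm
  rw [iteratedDeriv_succ]
  exact (hd.differentiableAt (hs.mem_nhds hx)).hasDerivAt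

noncomputable def ladderOp (f : ℝ → ℝ) (y : ℝ) : ℝ :=
  deriv (fun x => x * deriv (fun x => x * (x + 1) * deriv (fun x => x * deriv f x) x) x) y

theorem ladderOp_eq_of_hasDerivAt {f f₁ f₂ f₃ f₄ : ℝ → ℝ} {U : Set ℝ} (hU : IsOpen U)
    (hf : ∀ x ∈ U, HasDerivAt f (f₁ x) x) (hf₁ : ∀ x ∈ U, HasDerivAt f₁ (f₂ x) x)
    (hf₂ : ∀ x ∈ U, HasDerivAt f₂ (f₃ x) x) {y : ℝ} (hy : y ∈ U) (hf₃ : HasDerivAt f₃ (f₄ y) y) :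
    ladderOp f y = y ^ 3 * (y + 1) * f₄ y + y ^ 2 * (6 + 8 * y) * f₃ y
      + y * (7 + 14 * y) * f₂ y + (1 + 4 * y) * f₁ y := by
  have e₁ : EqOn (fun x => x * deriv f x) (fun x => x * f₁ x) U := fun x hx => by
    simp only [(hf x hx).deriv]
  have h₁ : EqOn (deriv fun x => x * deriv f x) (fun x => f₁ x + x * f₂ x) U := fun x hx =>
    (e₁.deriv hU hx).trans (((hasDerivAt_id' x).fun_mul (hf₁ x hx)).congr_deriv (by ring)).deriv
  have e₂ : EqOn (fun x => x * (x + 1) * deriv (fun x => x * deriv f x) x)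
      (fun x => x * (x + 1) * (f₁ x + x * f₂ x)) U := fun x hx => by
    simp only [h₁ hx]
  have h₂ : EqOn (deriv fun x => x * (x + 1) * deriv (fun x => x * deriv f x) x)
      (fun x => (2 * x + 1) * (f₁ x + x * f₂ x) + x * (x + 1) * (2 * f₂ x + x * f₃ x)) U :=
    fun x hx => (e₂.deriv hU hx).trans
      ((((hasDerivAt_id' x).fun_mul ((hasDerivAt_id' x).add_const 1)).fun_mul
        ((hf₁ x hx).fun_add ((hasDerivAt_id' x).fun_mul (hf₂ x hx)))).congr_deriv (by ring)).deriv
  have e₃ : EqOn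
      (fun x => x * deriv (fun x => x * (x + 1) * deriv (fun x => x * deriv f x) x) x)
      (fun x => x * ((2 * x + 1) * (f₁ x + x * f₂ x)
        + x * (x + 1) * (2 * f₂ x + x * f₃ x))) U := fun x hx => by
    simp only [h₂ hx]
  exact (e₃.deriv hU hy).trans
    (((hasDerivAt_id' y).fun_mul ((((hasDerivAt_id' y).const_mul 2).add_const 1).fun_mul
      ((hf₁ y hy).fun_add ((hasDerivAt_id' y).fun_mul (hf₂ y hy))) |>.fun_add
      ((((hasDerivAt_id' y).fun_mul ((hasDerivAt_id' y).add_const 1)).fun_mul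
        ((((hf₂ y hy).const_mul 2).fun_add ((hasDerivAt_id' y).fun_mul hf₃))))))).congr_deriv
          (by ring)).deriv

theorem ContDiffOn.ladderOp_eq {f : ℝ → ℝ} {U : Set ℝ} (hf : ContDiffOn ℝ 4 f U)
    (hU : IsOpen U) {y : ℝ} (hy : y ∈ U) :
    ladderOp f y = y ^ 3 * (y + 1) * iteratedDeriv 4 f y
      + y ^ 2 * (6 + 8 * y) * iteratedDeriv 3 f y + y * (7 + 14 * y) * iteratedDeriv 2 f y
      + (1 + 4 * y) * deriv f y := by
  have hD : ∀ m : ℕ, m < 4 → ∀ x ∈ U,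
      HasDerivAt (iteratedDeriv m f) (iteratedDeriv (m + 1) f x) x :=
    fun m hm x hx => hf.hasDerivAt_iteratedDeriv hU (by exact_mod_cast hm) hx
  rw [← iteratedDeriv_one]
  exact ladderOp_eq_of_hasDerivAt hU (hD 0 (by norm_num)) (hD 1 (by norm_num))
    (hD 2 (by norm_num)) hy (hD 3 (by norm_num) y hy)

noncomputable def f₃ (u : ℝ) : ℝ := log u ^ 2 + 2 * dilog (-u)

theorem hasDerivAt_f₃ {y : ℝ} (h0 : 0 < y) (h1 : y < 1) :
    HasDerivAt f₃ (2 * (log y - log (1 + y)) / y) y := by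
  have hdilog : HasDerivAt (fun u => dilog (-u)) (-log (1 - -y) / -y * -1) y :=
    (hasDerivAt_dilog (by rwa [abs_neg, abs_of_pos h0]) (neg_ne_zero.2 h0.ne')).comp y
      (hasDerivAt_neg y)
  refine (((hasDerivAt_log h0.ne').pow 2).fun_add (hdilog.const_mul 2)).congr_deriv ?_
  rw [sub_neg_eq_add, add_comm 1 y]
  field_simp
  ring

theorem contDiffOn_f₃ : ContDiffOn ℝ 4 f₃ (Ioo 0 1) := by
  have hderiv : EqOn (deriv f₃) (fun y => 2 * (log y - log (1 + y)) / y) (Ioo 0 1) :=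
    fun y hy => (hasDerivAt_f₃ hy.1 hy.2).deriv
  refine (contDiffOn_succ_iff_deriv_of_isOpen (n := 3) isOpen_Ioo).2
    ⟨fun y hy => (hasDerivAt_f₃ hy.1 hy.2).differentiableAt.differentiableWithinAt,
      by simp, ContDiffOn.congr (fun y hy => ?_) hderiv⟩
  have hy0 : 0 < y := hy.1
  fun_prop (disch := positivity)

theorem ladderOp_f₃ {y : ℝ} (hy : y ∈ Ioo (0 : ℝ) 1) : ladderOp f₃ y = 0 := by
  have hlog : EqOn (fun x => x * deriv f₃ x) (fun x => 2 * (log x - log (1 + x))) (Ioo 0 1) :=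
    fun x hx => by
      simp only [(hasDerivAt_f₃ hx.1 hx.2).deriv]
      field_simp [hx.1.ne']
  have hconst : EqOn (fun x => x * (x + 1) * deriv (fun x => x * deriv f₃ x) x) (fun _ => 2)
      (Ioo 0 1) := fun x hx => by
    have h1x : (0 : ℝ) < 1 + x := by linarith [hx.1]
    have hder := ((hasDerivAt_log hx.1.ne').sub
      ((hasDerivAt_log h1x.ne').comp x ((hasDerivAt_id' x).const_add 1))).const_mul 2
    simp only [(hlog.deriv isOpen_Ioo hx).trans hder.deriv]
    field_simp [hx.1.ne']
    ring
  have hzero : EqOn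
      (fun x => x * deriv (fun x => x * (x + 1) * deriv (fun x => x * deriv f₃ x) x) x)
      (fun _ => 0) (Ioo 0 1) := fun x hx => by
    simp only [hconst.deriv isOpen_Ioo hx, deriv_const, mul_zero]
  exact (hzero.deriv isOpen_Ioo hy).trans (deriv_const y 0)

/-- `f₃(y) = log(y)² + 2·Li₂(−y)` solves the fourth-order ladder ODE
`y³(y+1)f⁗ + y²(6+8y)f‴ + y(7+14y)f″ + (1+4y)f′ = 0` for `0 < y < 1`. -/
theorem ladder_ode_solution_f3 :
    ∀ y : ℝ, 0 < y → y < 1 →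
      letI f : ℝ → ℝ := fun u => (Real.log u) ^ 2 + 2 * dilog (-u)
      y ^ 3 * (y + 1) * iteratedDeriv 4 f y + y ^ 2 * (6 + 8 * y) * iteratedDeriv 3 f y
        + y * (7 + 14 * y) * iteratedDeriv 2 f y + (1 + 4 * y) * deriv f y = 0 := by
  intro y hy0 hy1
  exact (contDiffOn_f₃.ladderOp_eq isOpen_Ioo ⟨hy0, hy1⟩).symm.trans (ladderOp_f₃ ⟨hy0, hy1⟩)
end

section
/- If f : U → ℝ is a smooth solution on an open set U ⊆ (0,∞)² of the two PDEs Q₁f = y₂²∂₂²f + 2y₂y₃∂₂∂₃f + (y₃−1)y₃∂₃²f + 3y₂∂₂f + (3y₃−1)∂₃f + f = 0 and Q₂f = y₂∂₂²f − y₃∂₃²f + ∂₂f − ∂₃f = 0, then the function g(x₁,x₂,x₃) = x₁⁻¹·f(x₂/x₁, x₃/x₁) satisfies x₁∂₁²g − x₃∂₃²g + ∂₁g − ∂₃g = 0 and x₂∂₂²g − x₃∂₃²g + ∂₂g − ∂₃g = 0 and x₁∂₁g + x₂∂₂g + x₃∂₃g + g = 0, on the corresponding open subset of (0,∞)³. 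-/
open Topology Filter
set_option maxHeartbeats 1000000

/-- Reduction of the conformal ideal `I₃` to two variables: if `f` is a smooth solution
on an open `U ⊆ (0,∞)²` of the PDEs `Q₁f = 0` and `Q₂f = 0`, then
`g(x₁,x₂,x₃) = x₁⁻¹·f(x₂/x₁, x₃/x₁)` solves the three conformal PDEs on the
corresponding open subset of `(0,∞)³`. -/
theorem two_variable_reduction (f : ℝ → ℝ → ℝ) (U : Set (ℝ × ℝ))
    (hUopen : IsOpen U) (hUsub : U ⊆ Set.Ioi (0 : ℝ) ×ˢ Set.Ioi (0 : ℝ))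
    (hsmooth : ContDiffOn ℝ (⊤ : ℕ∞) (fun p : ℝ × ℝ => f p.1 p.2) U)
    (hQ1 : ∀ y2 y3 : ℝ, (y2, y3) ∈ U →
      y2 ^ 2 * iteratedDeriv 2 (fun u => f u y3) y2
        + 2 * y2 * y3 * deriv (fun u => deriv (f u) y3) y2
        + (y3 - 1) * y3 * iteratedDeriv 2 (f y2) y3
        + 3 * y2 * deriv (fun u => f u y3) y2
        + (3 * y3 - 1) * deriv (f y2) y3 + f y2 y3 = 0)
    (hQ2 : ∀ y2 y3 : ℝ, (y2, y3) ∈ U →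
      y2 * iteratedDeriv 2 (fun u => f u y3) y2
        - y3 * iteratedDeriv 2 (f y2) y3
        + deriv (fun u => f u y3) y2 - deriv (f y2) y3 = 0) :
    ∀ x1 x2 x3 : ℝ, 0 < x1 → (x2 / x1, x3 / x1) ∈ U →
      letI g : ℝ → ℝ → ℝ → ℝ := fun u1 u2 u3 => u1⁻¹ * f (u2 / u1) (u3 / u1)
      (x1 * iteratedDeriv 2 (fun v => g v x2 x3) x1
          - x3 * iteratedDeriv 2 (fun v => g x1 x2 v) x3
          + deriv (fun v => g v x2 x3) x1 - deriv (fun v => g x1 x2 v) x3 = 0) ∧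
      (x2 * iteratedDeriv 2 (fun v => g x1 v x3) x2
          - x3 * iteratedDeriv 2 (fun v => g x1 x2 v) x3
          + deriv (fun v => g x1 v x3) x2 - deriv (fun v => g x1 x2 v) x3 = 0) ∧
      (x1 * deriv (fun v => g v x2 x3) x1 + x2 * deriv (fun v => g x1 v x3) x2
          + x3 * deriv (fun v => g x1 x2 v) x3 + g x1 x2 x3 = 0) := by
  intro x1 x2 x3 hx1 hyU
  have hx1' : x1 ≠ 0 := ne_of_gt hx1
  set F : ℝ × ℝ → ℝ := fun p => f p.1 p.2 with hFdef
  set Φ : ℝ × ℝ → ((ℝ × ℝ) →L[ℝ] ℝ) := fun p => fderiv ℝ F p with hPhidef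
  have hFat : ∀ p ∈ U, ContDiffAt ℝ (⊤ : ℕ∞) F p := fun p hp =>
    hsmooth.contDiffAt (hUopen.mem_nhds hp)
  have hdF : ∀ p ∈ U, HasFDerivAt F (Φ p) p := fun p hp =>
    ((hFat p hp).differentiableAt (by simp)).hasFDerivAt
  have hPhiat : ∀ p ∈ U, ContDiffAt ℝ (⊤ : ℕ∞) Φ p := fun p hp =>
    (hFat p hp).fderiv_right (by simp)
  have hdPhi : ∀ p ∈ U, HasFDerivAt Φ (fderiv ℝ Φ p) p := fun p hp =>
    ((hPhiat p hp).differentiableAt (by simp)).hasFDerivAt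
  -- linearity expansion lemmas
  have lin : ∀ (L : (ℝ × ℝ) →L[ℝ] ℝ) (s t : ℝ),
      L (s, t) = s * L (1, 0) + t * L (0, 1) := by
    intro L s t
    have h : ((s, t) : ℝ × ℝ) = s • ((1 : ℝ), (0 : ℝ)) + t • ((0 : ℝ), (1 : ℝ)) := by
      simp [Prod.ext_iff]
    rw [h, map_add, map_smul, map_smul, smul_eq_mul, smul_eq_mul]
  have lin2 : ∀ (M : (ℝ × ℝ) →L[ℝ] ((ℝ × ℝ) →L[ℝ] ℝ)) (s t : ℝ) (w : ℝ × ℝ),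
      M (s, t) w = s * M (1, 0) w + t * M (0, 1) w := by
    intro M s t w
    have h : ((s, t) : ℝ × ℝ) = s • ((1 : ℝ), (0 : ℝ)) + t • ((0 : ℝ), (1 : ℝ)) := by
      simp [Prod.ext_iff]
    rw [h, map_add, map_smul, map_smul]
    simp [smul_eq_mul]
  -- partial derivatives along coordinate lines
  have hd2 : ∀ p ∈ U, HasDerivAt (fun u => f u p.2) (Φ p (1, 0)) p.1 := by
    intro p hp
    exact (hdF p hp).comp_hasDerivAt p.1 ((hasDerivAt_id p.1).prodMk (hasDerivAt_const p.1 p.2))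
  have hd3 : ∀ p ∈ U, HasDerivAt (fun v => f p.1 v) (Φ p (0, 1)) p.2 := by
    intro p hp
    exact (hdF p hp).comp_hasDerivAt p.2 ((hasDerivAt_const p.2 p.1).prodMk (hasDerivAt_id p.2))
  -- derivative of Φ applied to a fixed vector, along a curve
  have hdPhiv : ∀ (w : ℝ × ℝ) (c : ℝ → ℝ × ℝ) (c' : ℝ × ℝ) (t : ℝ), c t ∈ U →
      HasDerivAt c c' t →
      HasDerivAt (fun s => Φ (c s) w) (fderiv ℝ Φ (c t) c' w) t := by
    intro w c c' t hct hc
    exact (((ContinuousLinearMap.apply ℝ ℝ w).hasFDerivAt).comp (c t)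
      (hdPhi (c t) hct)).comp_hasDerivAt t hc
  -- derivative of c/t
  have hdivc : ∀ (cst v : ℝ), v ≠ 0 →
      HasDerivAt (fun t => cst / t) (-(cst * (v ^ 2)⁻¹)) v := by
    intro cst v hv
    have h := (hasDerivAt_inv hv).const_mul cst
    have h2 : cst * -(v ^ 2)⁻¹ = -(cst * (v ^ 2)⁻¹) := by ring
    rw [h2] at h
    simpa [div_eq_mul_inv] using h
  -- hypotheses rewritten at the base point
  have hmem2 : ∀ᶠ u in 𝓝 (x2 / x1), (u, x3 / x1) ∈ U :=
    (continuousAt_id.prodMk continuousAt_const).eventually_mem (hUopen.mem_nhds hyU)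
  have hmem3 : ∀ᶠ t in 𝓝 (x3 / x1), (x2 / x1, t) ∈ U :=
    (continuousAt_const.prodMk continuousAt_id).eventually_mem (hUopen.mem_nhds hyU)
  have two_eq : (2 : ℕ) = 1 + 1 := rfl
  have hb2 : deriv (fun u => f u (x3 / x1)) (x2 / x1) = Φ (x2 / x1, x3 / x1) (1, 0) :=
    (hd2 (x2 / x1, x3 / x1) hyU).deriv
  have hb3 : deriv (f (x2 / x1)) (x3 / x1) = Φ (x2 / x1, x3 / x1) (0, 1) :=
    (hd3 (x2 / x1, x3 / x1) hyU).deriv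
  have hc22 : iteratedDeriv 2 (fun u => f u (x3 / x1)) (x2 / x1)
      = fderiv ℝ Φ (x2 / x1, x3 / x1) (1, 0) (1, 0) := by
    rw [two_eq, iteratedDeriv_succ, iteratedDeriv_one]
    have hev : deriv (fun u => f u (x3 / x1)) =ᶠ[𝓝 (x2 / x1)]
        fun u => Φ (u, x3 / x1) (1, 0) := by
      filter_upwards [hmem2] with u hu using (hd2 (u, x3 / x1) hu).deriv
    rw [hev.deriv_eq]
    exact (hdPhiv (1, 0) (fun u => (u, x3 / x1)) (1, 0) (x2 / x1) hyU
      ((hasDerivAt_id _).prodMk (hasDerivAt_const _ _))).deriv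
  have hc23 : deriv (fun u => deriv (f u) (x3 / x1)) (x2 / x1)
      = fderiv ℝ Φ (x2 / x1, x3 / x1) (1, 0) (0, 1) := by
    have hev : (fun u => deriv (f u) (x3 / x1)) =ᶠ[𝓝 (x2 / x1)]
        fun u => Φ (u, x3 / x1) (0, 1) := by
      filter_upwards [hmem2] with u hu using (hd3 (u, x3 / x1) hu).deriv
    rw [hev.deriv_eq]
    exact (hdPhiv (0, 1) (fun u => (u, x3 / x1)) (1, 0) (x2 / x1) hyU
      ((hasDerivAt_id _).prodMk (hasDerivAt_const _ _))).deriv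
  have hc33 : iteratedDeriv 2 (f (x2 / x1)) (x3 / x1)
      = fderiv ℝ Φ (x2 / x1, x3 / x1) (0, 1) (0, 1) := by
    rw [two_eq, iteratedDeriv_succ, iteratedDeriv_one]
    have hev : deriv (f (x2 / x1)) =ᶠ[𝓝 (x3 / x1)]
        fun t => Φ (x2 / x1, t) (0, 1) := by
      filter_upwards [hmem3] with t ht using (hd3 (x2 / x1, t) ht).deriv
    rw [hev.deriv_eq]
    exact (hdPhiv (0, 1) (fun t => (x2 / x1, t)) (0, 1) (x3 / x1) hyU
      ((hasDerivAt_const _ _).prodMk (hasDerivAt_id _))).deriv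
  -- symmetry of second derivatives
  have hsymm : fderiv ℝ Φ (x2 / x1, x3 / x1) (0, 1) (1, 0)
      = fderiv ℝ Φ (x2 / x1, x3 / x1) (1, 0) (0, 1) := by
    have hev : ∀ᶠ z in 𝓝 ((x2 / x1, x3 / x1) : ℝ × ℝ), HasFDerivAt F (Φ z) z := by
      filter_upwards [hUopen.mem_nhds hyU] with z hz using hdF z hz
    exact second_derivative_symmetric_of_eventually hev (hdPhi _ hyU) _ _
  have hQ1' := hQ1 (x2 / x1) (x3 / x1) hyU
  have hQ2' := hQ2 (x2 / x1) (x3 / x1) hyU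
  rw [hb2, hb3, hc22, hc23, hc33] at hQ1'
  rw [hb2, hb3, hc22, hc33] at hQ2'
  -- first derivatives of g
  have hc1 : HasDerivAt (fun v => ((x2 / v, x3 / v) : ℝ × ℝ))
      (-(x2 * (x1 ^ 2)⁻¹), -(x3 * (x1 ^ 2)⁻¹)) x1 :=
    (hdivc x2 x1 hx1').prodMk (hdivc x3 x1 hx1')
  have hT1 : HasDerivAt (fun v => v⁻¹ * f (x2 / v) (x3 / v))
      (-(x1 ^ 2)⁻¹ * f (x2 / x1) (x3 / x1)
        + x1⁻¹ * Φ (x2 / x1, x3 / x1) (-(x2 * (x1 ^ 2)⁻¹), -(x3 * (x1 ^ 2)⁻¹))) x1 :=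
    (hasDerivAt_inv hx1').mul (by have h := (hdF _ hyU).comp_hasDerivAt x1 hc1; exact h)
  have hc2 : HasDerivAt (fun v => ((v / x1, x3 / x1) : ℝ × ℝ)) (1 / x1, 0) x2 :=
    ((hasDerivAt_id x2).div_const x1).prodMk (hasDerivAt_const x2 (x3 / x1))
  have hT2 : HasDerivAt (fun v => x1⁻¹ * f (v / x1) (x3 / x1))
      (x1⁻¹ * Φ (x2 / x1, x3 / x1) (1 / x1, 0)) x2 :=
    HasDerivAt.const_mul x1⁻¹ (by have h := (hdF _ hyU).comp_hasDerivAt x2 hc2; exact h)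
  have hc3 : ∀ t : ℝ, HasDerivAt (fun v => ((x2 / x1, v / x1) : ℝ × ℝ)) (0, 1 / x1) t :=
    fun t => (hasDerivAt_const t (x2 / x1)).prodMk ((hasDerivAt_id t).div_const x1)
  have hT3 : HasDerivAt (fun v => x1⁻¹ * f (x2 / x1) (v / x1))
      (x1⁻¹ * Φ (x2 / x1, x3 / x1) (0, 1 / x1)) x3 :=
    HasDerivAt.const_mul x1⁻¹ (by have h := (hdF _ hyU).comp_hasDerivAt x3 (hc3 x3); exact h)
  -- second derivative in x3 direction
  set E3 : ℝ → ℝ := fun t => x1⁻¹ * Φ (x2 / x1, t / x1) (0, 1 / x1) with hE3def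
  have hT3gen : ∀ t : ℝ, (x2 / x1, t / x1) ∈ U →
      HasDerivAt (fun v => x1⁻¹ * f (x2 / x1) (v / x1)) (E3 t) t := by
    intro t ht
    exact ((hdF _ ht).comp_hasDerivAt t (hc3 t)).const_mul x1⁻¹
  have hmemE3 : ∀ᶠ t in 𝓝 x3, (x2 / x1, t / x1) ∈ U := by
    have hcont : ContinuousAt (fun t : ℝ => ((x2 / x1, t / x1) : ℝ × ℝ)) x3 :=
      (continuousAt_const.prodMk (continuousAt_id.div continuousAt_const hx1'))
    exact hcont.eventually_mem (hUopen.mem_nhds hyU)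
  have hevE3 : deriv (fun v => x1⁻¹ * f (x2 / x1) (v / x1)) =ᶠ[𝓝 x3] E3 := by
    filter_upwards [hmemE3] with t ht using (hT3gen t ht).deriv
  have hE3' : HasDerivAt E3
      (x1⁻¹ * fderiv ℝ Φ (x2 / x1, x3 / x1) (0, 1 / x1) (0, 1 / x1)) x3 :=
    (hdPhiv (0, 1 / x1) (fun t => ((x2 / x1, t / x1) : ℝ × ℝ)) (0, 1 / x1) x3 hyU
      (hc3 x3)).const_mul x1⁻¹
  -- second derivative in x2 direction
  set E2 : ℝ → ℝ := fun t => x1⁻¹ * Φ (t / x1, x3 / x1) (1 / x1, 0) with hE2def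
  have hc2' : ∀ t : ℝ, HasDerivAt (fun v => ((v / x1, x3 / x1) : ℝ × ℝ)) (1 / x1, 0) t :=
    fun t => ((hasDerivAt_id t).div_const x1).prodMk (hasDerivAt_const t (x3 / x1))
  have hT2gen : ∀ t : ℝ, (t / x1, x3 / x1) ∈ U →
      HasDerivAt (fun v => x1⁻¹ * f (v / x1) (x3 / x1)) (E2 t) t := by
    intro t ht
    exact ((hdF _ ht).comp_hasDerivAt t (hc2' t)).const_mul x1⁻¹
  have hmemE2 : ∀ᶠ t in 𝓝 x2, (t / x1, x3 / x1) ∈ U := by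
    have hcont : ContinuousAt (fun t : ℝ => ((t / x1, x3 / x1) : ℝ × ℝ)) x2 :=
      ((continuousAt_id.div continuousAt_const hx1').prodMk continuousAt_const)
    exact hcont.eventually_mem (hUopen.mem_nhds hyU)
  have hevE2 : deriv (fun v => x1⁻¹ * f (v / x1) (x3 / x1)) =ᶠ[𝓝 x2] E2 := by
    filter_upwards [hmemE2] with t ht using (hT2gen t ht).deriv
  have hE2' : HasDerivAt E2
      (x1⁻¹ * fderiv ℝ Φ (x2 / x1, x3 / x1) (1 / x1, 0) (1 / x1, 0)) x2 :=
    (hdPhiv (1 / x1, 0) (fun t => ((t / x1, x3 / x1) : ℝ × ℝ)) (1 / x1, 0) x2 hyU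
      (hc2' x2)).const_mul x1⁻¹
  -- second derivative in x1 direction
  set E1 : ℝ → ℝ := fun v => -(v ^ 2)⁻¹ * f (x2 / v) (x3 / v)
      + v⁻¹ * (-(x2 * (v ^ 2)⁻¹) * Φ (x2 / v, x3 / v) (1, 0)
        + -(x3 * (v ^ 2)⁻¹) * Φ (x2 / v, x3 / v) (0, 1)) with hE1def
  have hT1gen : ∀ v : ℝ, v ≠ 0 → (x2 / v, x3 / v) ∈ U →
      HasDerivAt (fun t => t⁻¹ * f (x2 / t) (x3 / t)) (E1 v) v := by
    intro v hv hvU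
    have h := (hasDerivAt_inv hv).mul ((hdF _ hvU).comp_hasDerivAt v
      ((hdivc x2 v hv).prodMk (hdivc x3 v hv)))
    rw [hE1def]
    rw [lin (Φ (x2 / v, x3 / v)) (-(x2 * (v ^ 2)⁻¹)) (-(x3 * (v ^ 2)⁻¹))] at h
    exact h
  have hmemE1 : ∀ᶠ v in 𝓝 x1, v ≠ 0 ∧ (x2 / v, x3 / v) ∈ U := by
    have h1 : ∀ᶠ v in 𝓝 x1, v ≠ 0 := eventually_ne_nhds hx1'
    have hcont : ContinuousAt (fun v : ℝ => ((x2 / v, x3 / v) : ℝ × ℝ)) x1 :=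
      ((continuousAt_const.div continuousAt_id hx1').prodMk
        (continuousAt_const.div continuousAt_id hx1'))
    exact h1.and (hcont.eventually_mem (hUopen.mem_nhds hyU))
  have hevE1 : deriv (fun t => t⁻¹ * f (x2 / t) (x3 / t)) =ᶠ[𝓝 x1] E1 := by
    filter_upwards [hmemE1] with v hv using (hT1gen v hv.1 hv.2).deriv
  have hE1' : HasDerivAt E1 _ x1 :=
    ((((hasDerivAt_pow 2 x1).inv (pow_ne_zero 2 hx1')).neg.mul
        ((hdF _ hyU).comp_hasDerivAt x1 hc1)).add
      ((hasDerivAt_inv hx1').mul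
        (((((hasDerivAt_pow 2 x1).inv (pow_ne_zero 2 hx1')).const_mul x2).neg.mul
            (hdPhiv (1, 0) (fun v => ((x2 / v, x3 / v) : ℝ × ℝ))
              (-(x2 * (x1 ^ 2)⁻¹), -(x3 * (x1 ^ 2)⁻¹)) x1 hyU hc1)).add
          (((((hasDerivAt_pow 2 x1).inv (pow_ne_zero 2 hx1')).const_mul x3).neg.mul
            (hdPhiv (0, 1) (fun v => ((x2 / v, x3 / v) : ℝ × ℝ))
              (-(x2 * (x1 ^ 2)⁻¹), -(x3 * (x1 ^ 2)⁻¹)) x1 hyU hc1))))))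
  simp only [Pi.mul_apply, Pi.add_apply, Pi.neg_apply, Pi.inv_apply] at hE1'
  -- now prove the three equations
  refine ⟨?_, ?_, ?_⟩
  · -- first conformal PDE
    show x1 * iteratedDeriv 2 (fun v => v⁻¹ * f (x2 / v) (x3 / v)) x1
        - x3 * iteratedDeriv 2 (fun v => x1⁻¹ * f (x2 / x1) (v / x1)) x3
        + deriv (fun v => v⁻¹ * f (x2 / v) (x3 / v)) x1
        - deriv (fun v => x1⁻¹ * f (x2 / x1) (v / x1)) x3 = 0
    rw [two_eq, iteratedDeriv_succ, iteratedDeriv_one, iteratedDeriv_succ, iteratedDeriv_one]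
    rw [hevE1.deriv_eq, hevE3.deriv_eq, hE1'.deriv, hE3'.deriv, hT1.deriv, hT3.deriv]
    rw [lin (Φ (x2 / x1, x3 / x1)) (-(x2 * (x1 ^ 2)⁻¹)) (-(x3 * (x1 ^ 2)⁻¹))]
    rw [lin (Φ (x2 / x1, x3 / x1)) 0 (1 / x1)]
    have hFa : (F ∘ fun v => ((x2 / v, x3 / v) : ℝ × ℝ)) x1 = f (x2 / x1) (x3 / x1) := rfl
    rw [hFa]
    rw [lin2 (fderiv ℝ Φ (x2 / x1, x3 / x1)) (-(x2 * (x1 ^ 2)⁻¹)) (-(x3 * (x1 ^ 2)⁻¹)) (1, 0)]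
    rw [lin2 (fderiv ℝ Φ (x2 / x1, x3 / x1)) (-(x2 * (x1 ^ 2)⁻¹)) (-(x3 * (x1 ^ 2)⁻¹)) (0, 1)]
    rw [lin2 (fderiv ℝ Φ (x2 / x1, x3 / x1)) 0 (1 / x1) (0, 1 / x1)]
    rw [lin (fderiv ℝ Φ (x2 / x1, x3 / x1) (1, 0)) 0 (1 / x1)]
    rw [lin (fderiv ℝ Φ (x2 / x1, x3 / x1) (0, 1)) 0 (1 / x1)]
    rw [hsymm] at *
    set a := f (x2 / x1) (x3 / x1)
    set b2 := Φ (x2 / x1, x3 / x1) (1, 0)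
    set b3 := Φ (x2 / x1, x3 / x1) (0, 1)
    set c22 := fderiv ℝ Φ (x2 / x1, x3 / x1) (1, 0) (1, 0)
    set c23 := fderiv ℝ Φ (x2 / x1, x3 / x1) (1, 0) (0, 1)
    set c33 := fderiv ℝ Φ (x2 / x1, x3 / x1) (0, 1) (0, 1)
    have H1 : x2 ^ 2 * c22 + 2 * x2 * x3 * c23 + (x3 - x1) * x3 * c33
        + 3 * x1 * x2 * b2 + (3 * x3 - x1) * x1 * b3 + x1 ^ 2 * a = 0 := by
      field_simp at hQ1'
      exact mul_left_cancel₀ (pow_ne_zero 6 hx1')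
        (by linear_combination x1 ^ 6 * hQ1' :
          x1 ^ 6 * (x2 ^ 2 * c22 + 2 * x2 * x3 * c23 + (x3 - x1) * x3 * c33
            + 3 * x1 * x2 * b2 + (3 * x3 - x1) * x1 * b3 + x1 ^ 2 * a) = x1 ^ 6 * 0)
    field_simp
    linear_combination H1
  · -- second conformal PDE
    show x2 * iteratedDeriv 2 (fun v => x1⁻¹ * f (v / x1) (x3 / x1)) x2
        - x3 * iteratedDeriv 2 (fun v => x1⁻¹ * f (x2 / x1) (v / x1)) x3
        + deriv (fun v => x1⁻¹ * f (v / x1) (x3 / x1)) x2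
        - deriv (fun v => x1⁻¹ * f (x2 / x1) (v / x1)) x3 = 0
    rw [two_eq, iteratedDeriv_succ, iteratedDeriv_one, iteratedDeriv_succ, iteratedDeriv_one]
    rw [hevE2.deriv_eq, hevE3.deriv_eq, hE2'.deriv, hE3'.deriv, hT2.deriv, hT3.deriv]
    rw [lin2 (fderiv ℝ Φ (x2 / x1, x3 / x1)) (1 / x1) 0 (1 / x1, 0)]
    rw [lin2 (fderiv ℝ Φ (x2 / x1, x3 / x1)) 0 (1 / x1) (0, 1 / x1)]
    rw [lin (fderiv ℝ Φ (x2 / x1, x3 / x1) (1, 0)) (1 / x1) 0]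
    rw [lin (fderiv ℝ Φ (x2 / x1, x3 / x1) (0, 1)) (1 / x1) 0]
    rw [lin (fderiv ℝ Φ (x2 / x1, x3 / x1) (1, 0)) 0 (1 / x1)]
    rw [lin (fderiv ℝ Φ (x2 / x1, x3 / x1) (0, 1)) 0 (1 / x1)]
    rw [lin (Φ (x2 / x1, x3 / x1)) (1 / x1) 0]
    rw [lin (Φ (x2 / x1, x3 / x1)) 0 (1 / x1)]
    field_simp at hQ2'
    field_simp
    linear_combination hQ2'
  · -- Euler-type identity
    show x1 * deriv (fun v => v⁻¹ * f (x2 / v) (x3 / v)) x1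
        + x2 * deriv (fun v => x1⁻¹ * f (v / x1) (x3 / x1)) x2
        + x3 * deriv (fun v => x1⁻¹ * f (x2 / x1) (v / x1)) x3
        + x1⁻¹ * f (x2 / x1) (x3 / x1) = 0
    rw [hT1.deriv, hT2.deriv, hT3.deriv]
    rw [lin (Φ (x2 / x1, x3 / x1)) (-(x2 * (x1 ^ 2)⁻¹)) (-(x3 * (x1 ^ 2)⁻¹))]
    rw [lin (Φ (x2 / x1, x3 / x1)) (1 / x1) 0]
    rw [lin (Φ (x2 / x1, x3 / x1)) 0 (1 / x1)]
    field_simp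
    ring
end
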